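/- Let f be a ρ-gap-adjusted misspecified approximation of f₀ on a compact set X with 0 ≤ ρ < 1, i.e., |f(x) - f₀(x)| ≤ ρ(f* - f₀(x)) for all x, where f* = max_x f₀(x). Then max_{x∈X} f(x) = f*. -/

import Mathlib

theorem le_of_abs_sub_le_mul_sub {a b c ρ : ℝ} (hρ : ρ ≤ 1) (hbc : b ≤ c)
    (h : |a - b| ≤ ρ * (c - b)) : a ≤ c :=
  calc a ≤ b + ρ * (c - b) := by linarith [(abs_le.mp h).2]
    _ ≤ b + 1 * (c - b) := by gcongr
    _ = c := by ring

theorem gam_preserves_max_value_general {X : Type*} (f f₀ : X → ℝ)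
    (fstar : ℝ) (hmax : ∃ x, f₀ x = fstar ∧ ∀ y, f₀ y ≤ fstar)
    (ρ : ℝ) (hρ1 : ρ < 1)
    (hgam : ∀ x, |f x - f₀ x| ≤ ρ * (fstar - f₀ x)) :
    ∃ x, f x = fstar ∧ ∀ y, f y ≤ fstar := by
  obtain ⟨x, hx, hub⟩ := hmax
  refine ⟨x, ?_, fun y => le_of_abs_sub_le_mul_sub hρ1.le (hub y) (hgam y)⟩
  have hgap := hgam x
  rwa [hx, sub_self, mul_zero, abs_nonpos_iff, sub_eq_zero] at hgap

theorem gam_preserves_max_value {X : Type*} [TopologicalSpace X] [CompactSpace X]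
    [Nonempty X] (f f₀ : X → ℝ) (hf : Continuous f) (hf₀ : Continuous f₀)
    (fstar : ℝ) (hmax : ∃ x, f₀ x = fstar ∧ ∀ y, f₀ y ≤ fstar)
    (ρ : ℝ) (hρ0 : 0 ≤ ρ) (hρ1 : ρ < 1)
    (hgam : ∀ x, |f x - f₀ x| ≤ ρ * (fstar - f₀ x)) :
    ∃ x, f x = fstar ∧ ∀ y, f y ≤ fstar :=
  gam_preserves_max_value_general f f₀ fstar hmax ρ hρ1 hgam
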